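/- arXiv:2502.05122 — 2 statements merged into one kernel-verified Lean document; each statement's English description precedes it below -/
import Mathlib

section
/- Suppose a strictly positive, sufficiently smooth joint log-density π(x,y) admits causal velocity representations in both directions, with C² velocities v(y,x) (for X → Y) and ṽ(x,y) (for Y → X), i.e., ∂_x π = −∂_y v − v ∂_y π + ∂_x log p(x) and ∂_y π = −∂_x ṽ − ṽ ∂_x π + ∂_y log p(y). Then on the support, ∂²_y v + ∂_y v ∂_y π + v ∂²_y π = ∂²_x ṽ + ∂_x ṽ ∂_x π + ṽ ∂²_x π. -/
section Helpers

variable {E : Type*} [NormedAddCommGroup E] [NormedSpace ℝ E] {F : ℝ × ℝ → E}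

private lemma hdFst (hF : Differentiable ℝ F) (x y : ℝ) :
    HasDerivAt (fun x' => F (x', y)) (fderiv ℝ F (x, y) (1, 0)) x := by
  have hl : HasDerivAt (fun x' : ℝ => (x', y)) (((1:ℝ), (0:ℝ)) : ℝ × ℝ) x :=
    (hasDerivAt_id x).prodMk (hasDerivAt_const x y)
  exact ((hF (x, y)).hasFDerivAt.comp_hasDerivAt x hl)

private lemma hdSnd (hF : Differentiable ℝ F) (x y : ℝ) :
    HasDerivAt (fun y' => F (x, y')) (fderiv ℝ F (x, y) (0, 1)) y := by
  have hl : HasDerivAt (fun y' : ℝ => (x, y')) (((0:ℝ), (1:ℝ)) : ℝ × ℝ) y :=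
    (hasDerivAt_const y x).prodMk (hasDerivAt_id y)
  exact ((hF (x, y)).hasFDerivAt.comp_hasDerivAt y hl)

private lemma diff_fderiv (hF : ContDiff ℝ 2 F) :
    Differentiable ℝ (fderiv ℝ F) :=
  (hF.fderiv_right (m := 1) (by norm_num)).differentiable one_ne_zero

private lemma hdPdFst (hF : ContDiff ℝ 2 F) (w : ℝ × ℝ) (x y : ℝ) :
    HasDerivAt (fun x' => fderiv ℝ F (x', y) w)
      (fderiv ℝ (fderiv ℝ F) (x, y) (1, 0) w) x := by
  have h2 : HasDerivAt (fun x' => fderiv ℝ F (x', y))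
      (fderiv ℝ (fderiv ℝ F) (x, y) (1, 0)) x := hdFst (diff_fderiv hF) x y
  simpa using h2.clm_apply (hasDerivAt_const x w)

private lemma hdPdSnd (hF : ContDiff ℝ 2 F) (w : ℝ × ℝ) (x y : ℝ) :
    HasDerivAt (fun y' => fderiv ℝ F (x, y') w)
      (fderiv ℝ (fderiv ℝ F) (x, y) (0, 1) w) y := by
  have h2 : HasDerivAt (fun y' => fderiv ℝ F (x, y'))
      (fderiv ℝ (fderiv ℝ F) (x, y) (0, 1)) y := hdSnd (diff_fderiv hF) x y
  simpa using h2.clm_apply (hasDerivAt_const y w)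

end Helpers

/-- If a C² joint log-density `π` admits causal velocity representations in
both directions, with C² velocities `v` (for X → Y) and `vt` (for Y → X),
then the second-order cross identity between the two directions holds. -/
theorem two_direction_velocity_identity
    (π : ℝ → ℝ → ℝ) (v vt : ℝ → ℝ → ℝ) (lpx lpy : ℝ → ℝ)
    (hπ : ContDiff ℝ 2 (fun q : ℝ × ℝ => π q.1 q.2))
    (hv : ContDiff ℝ 2 (fun q : ℝ × ℝ => v q.1 q.2))
    (hvt : ContDiff ℝ 2 (fun q : ℝ × ℝ => vt q.1 q.2))
    (hlpx : Differentiable ℝ lpx) (hlpy : Differentiable ℝ lpy)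
    (hfwd : ∀ x y, deriv (fun x' => π x' y) x
        = -(deriv (fun y' => v y' x) y) - v y x * deriv (fun y' => π x y') y
          + deriv lpx x)
    (hbwd : ∀ x y, deriv (fun y' => π x y') y
        = -(deriv (fun x' => vt x' y) x) - vt x y * deriv (fun x' => π x' y) x
          + deriv lpy y) :
    ∀ x y,
      deriv (fun y' => deriv (fun y'' => v y'' x) y') y
        + deriv (fun y' => v y' x) y * deriv (fun y' => π x y') y
        + v y x * deriv (fun y' => deriv (fun y'' => π x y'') y') y
      =
      deriv (fun x' => deriv (fun x'' => vt x'' y) x') x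
        + deriv (fun x' => vt x' y) x * deriv (fun x' => π x' y) x
        + vt x y * deriv (fun x' => deriv (fun x'' => π x'' y) x') x := by
  intro x y
  set Pu : ℝ × ℝ → ℝ := fun q => π q.1 q.2 with hPu
  set Vu : ℝ × ℝ → ℝ := fun q => v q.1 q.2 with hVu
  set Wu : ℝ × ℝ → ℝ := fun q => vt q.1 q.2 with hWu
  have hπd : Differentiable ℝ Pu := hπ.differentiable (by norm_num)
  have hvd : Differentiable ℝ Vu := hv.differentiable (by norm_num)
  have hwd : Differentiable ℝ Wu := hvt.differentiable (by norm_num)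
  -- first-order partials, rewritten
  have ePx : ∀ a b : ℝ, deriv (fun x' => π x' b) a = fderiv ℝ Pu (a, b) (1, 0) :=
    fun a b => (hdFst hπd a b).deriv
  have ePy : ∀ a b : ℝ, deriv (fun y' => π a y') b = fderiv ℝ Pu (a, b) (0, 1) :=
    fun a b => (hdSnd hπd a b).deriv
  have eV : ∀ a b : ℝ, deriv (fun y' => v y' b) a = fderiv ℝ Vu (a, b) (1, 0) :=
    fun a b => (hdFst hvd a b).deriv
  have eW : ∀ a b : ℝ, deriv (fun x' => vt x' b) a = fderiv ℝ Wu (a, b) (1, 0) :=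
    fun a b => (hdFst hwd a b).deriv
  -- abbreviations for point values
  set Py := fderiv ℝ Pu (x, y) (0, 1) with hPy
  set Px := fderiv ℝ Pu (x, y) (1, 0) with hPx
  set Pyy := fderiv ℝ (fderiv ℝ Pu) (x, y) (0, 1) (0, 1) with hPyy
  set Pxx := fderiv ℝ (fderiv ℝ Pu) (x, y) (1, 0) (1, 0) with hPxx
  set Pxy := fderiv ℝ (fderiv ℝ Pu) (x, y) (0, 1) (1, 0) with hPxy
  set Pyx := fderiv ℝ (fderiv ℝ Pu) (x, y) (1, 0) (0, 1) with hPyx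
  set Vy := fderiv ℝ Vu (y, x) (1, 0) with hVy
  set Vyy := fderiv ℝ (fderiv ℝ Vu) (y, x) (1, 0) (1, 0) with hVyy
  set Wx := fderiv ℝ Wu (x, y) (1, 0) with hWx
  set Wxx := fderiv ℝ (fderiv ℝ Wu) (x, y) (1, 0) (1, 0) with hWxx
  -- differentiate the forward identity in y
  have eq1 : Pxy = -Vyy - (Vy * Py + v y x * Pyy) := by
    have efun : (fun y' => fderiv ℝ Pu (x, y') (1, 0))
        = fun y' => -(fderiv ℝ Vu (y', x) (1, 0))
            - v y' x * fderiv ℝ Pu (x, y') (0, 1) + deriv lpx x := by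
      funext y'
      rw [← ePx x y', ← eV y' x, ← ePy x y']
      exact hfwd x y'
    have hL : HasDerivAt (fun y' => fderiv ℝ Pu (x, y') (1, 0)) Pxy y :=
      hdPdSnd hπ (1, 0) x y
    have hR : HasDerivAt (fun y' => -(fderiv ℝ Vu (y', x) (1, 0))
            - v y' x * fderiv ℝ Pu (x, y') (0, 1) + deriv lpx x)
        (-Vyy - (Vy * Py + v y x * Pyy) + 0) y := by
      exact (((hdPdFst hv (1, 0) y x).neg.sub
        ((hdFst hvd y x).mul (hdPdSnd hπ (0, 1) x y))).add (hasDerivAt_const y _))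
    rw [efun] at hL
    simpa using hL.unique hR
  -- differentiate the backward identity in x
  have eq2 : Pyx = -Wxx - (Wx * Px + vt x y * Pxx) := by
    have efun : (fun x' => fderiv ℝ Pu (x', y) (0, 1))
        = fun x' => -(fderiv ℝ Wu (x', y) (1, 0))
            - vt x' y * fderiv ℝ Pu (x', y) (1, 0) + deriv lpy y := by
      funext x'
      rw [← ePy x' y, ← eW x' y, ← ePx x' y]
      exact hbwd x' y
    have hL : HasDerivAt (fun x' => fderiv ℝ Pu (x', y) (0, 1)) Pyx x :=
      hdPdFst hπ (0, 1) x y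
    have hR : HasDerivAt (fun x' => -(fderiv ℝ Wu (x', y) (1, 0))
            - vt x' y * fderiv ℝ Pu (x', y) (1, 0) + deriv lpy y)
        (-Wxx - (Wx * Px + vt x y * Pxx) + 0) x := by
      exact (((hdPdFst hvt (1, 0) x y).neg.sub
        ((hdFst hwd x y).mul (hdPdFst hπ (1, 0) x y))).add (hasDerivAt_const x _))
    rw [efun] at hL
    simpa using hL.unique hR
  -- symmetry of second derivatives
  have hsymm : Pxy = Pyx := by
    have := (hπ.contDiffAt (x := (x, y))).isSymmSndFDerivAt (by simp)
    exact this.eq (0, 1) (1, 0)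
  -- rewrite the goal in terms of the abbreviations
  have g1 : deriv (fun y' => deriv (fun y'' => v y'' x) y') y = Vyy := by
    have : (fun y' => deriv (fun y'' => v y'' x) y')
        = fun y' => fderiv ℝ Vu (y', x) (1, 0) := funext fun y' => eV y' x
    rw [this]; exact (hdPdFst hv (1, 0) y x).deriv
  have g2 : deriv (fun y' => deriv (fun y'' => π x y'') y') y = Pyy := by
    have : (fun y' => deriv (fun y'' => π x y'') y')
        = fun y' => fderiv ℝ Pu (x, y') (0, 1) := funext fun y' => ePy x y'
    rw [this]; exact (hdPdSnd hπ (0, 1) x y).deriv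
  have g3 : deriv (fun x' => deriv (fun x'' => vt x'' y) x') x = Wxx := by
    have : (fun x' => deriv (fun x'' => vt x'' y) x')
        = fun x' => fderiv ℝ Wu (x', y) (1, 0) := funext fun x' => eW x' y
    rw [this]; exact (hdPdFst hvt (1, 0) x y).deriv
  have g4 : deriv (fun x' => deriv (fun x'' => π x'' y) x') x = Pxx := by
    have : (fun x' => deriv (fun x'' => π x'' y) x')
        = fun x' => fderiv ℝ Pu (x', y) (1, 0) := funext fun x' => ePx x' y
    rw [this]; exact (hdPdFst hπ (1, 0) x y).deriv
  rw [g1, g2, g3, g4, eV y x, ePy x y, eW x y, ePx x y]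
  rw [hsymm] at eq1
  rw [eq1] at eq2
  linarith [eq2]
end

section
/- Let X and Y each admit additive noise model representations in both directions: Y = m(X) + ε_y and X = m̃(Y) + ε_x, with π(x,y) = log p(x,y) C² and everywhere ∂²_x π(x,y) ≠ 0. Then the backward mechanism derivative is determined by the forward one via ṁ̃(y) = ṁ(x) · ∂²_y π(x,y) / ∂²_x π(x,y) for all (x,y). -/
/-- If a C² joint log-density `π` admits additive noise model representations
in both directions (forward mechanism `m`, backward mechanism `mt`), and the
second `x`-derivative of `π` never vanishes, then the backward mechanism
derivative is determined by the forward one: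
`ṁt y = ṁ x * ∂²_y π / ∂²_x π`. -/
theorem anm_both_directions_constraint
    (π : ℝ → ℝ → ℝ) (m mt lpx lpy : ℝ → ℝ)
    (hπ : ContDiff ℝ 2 (fun q : ℝ × ℝ => π q.1 q.2))
    (hm : Differentiable ℝ m) (hmt : Differentiable ℝ mt)
    (hlpx : Differentiable ℝ lpx) (hlpy : Differentiable ℝ lpy)
    (hxx : ∀ x y, deriv (fun x' => deriv (fun x'' => π x'' y) x') x ≠ 0)
    (hfwd : ∀ x y, deriv (fun x' => π x' y) x
        = -(deriv m x) * deriv (fun y' => π x y') y + deriv lpx x)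
    (hbwd : ∀ x y, deriv (fun y' => π x y') y
        = -(deriv mt y) * deriv (fun x' => π x' y) x + deriv lpy y) :
    ∀ x y, deriv mt y
      = deriv m x * deriv (fun y' => deriv (fun y'' => π x y'') y') y
          / deriv (fun x' => deriv (fun x'' => π x'' y) x') x := by
  set F : ℝ × ℝ → ℝ := fun q => π q.1 q.2 with hFdef
  have hFd : Differentiable ℝ F := hπ.differentiable two_ne_zero
  have hg : ContDiff ℝ 1 (fderiv ℝ F) := hπ.fderiv_right (by norm_num)
  have hgd : Differentiable ℝ (fderiv ℝ F) := hg.differentiable one_ne_zero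
  -- first partial derivatives
  have hA : ∀ x y : ℝ, HasDerivAt (fun x' => π x' y) (fderiv ℝ F (x, y) (1, 0)) x := by
    intro x y
    have h1 : HasDerivAt (fun x' : ℝ => ((x', y) : ℝ × ℝ)) ((1:ℝ), (0:ℝ)) x :=
      HasDerivAt.prodMk (hasDerivAt_id x) (hasDerivAt_const x y)
    exact (hFd (x, y)).hasFDerivAt.comp_hasDerivAt x h1
  have hB : ∀ x y : ℝ, HasDerivAt (fun y' => π x y') (fderiv ℝ F (x, y) (0, 1)) y := by
    intro x y
    have h1 : HasDerivAt (fun y' : ℝ => ((x, y') : ℝ × ℝ)) ((0:ℝ), (1:ℝ)) y :=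
      HasDerivAt.prodMk (hasDerivAt_const y x) (hasDerivAt_id y)
    exact (hFd (x, y)).hasFDerivAt.comp_hasDerivAt y h1
  -- derivatives of the map p ↦ fderiv F p applied to fixed vectors, along axes
  have hGx : ∀ (x y : ℝ) (v : ℝ × ℝ), HasDerivAt (fun x' => fderiv ℝ F (x', y) v)
      (fderiv ℝ (fderiv ℝ F) (x, y) (1, 0) v) x := by
    intro x y v
    have h1 : HasDerivAt (fun x' : ℝ => ((x', y) : ℝ × ℝ)) ((1:ℝ), (0:ℝ)) x :=
      HasDerivAt.prodMk (hasDerivAt_id x) (hasDerivAt_const x y)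
    have h2 : HasDerivAt (fun x' => fderiv ℝ F (x', y))
        (fderiv ℝ (fderiv ℝ F) (x, y) (1, 0)) x :=
      (hgd (x, y)).hasFDerivAt.comp_hasDerivAt x h1
    have h3 := h2.clm_apply (hasDerivAt_const x v)
    simpa using h3
  have hGy : ∀ (x y : ℝ) (v : ℝ × ℝ), HasDerivAt (fun y' => fderiv ℝ F (x, y') v)
      (fderiv ℝ (fderiv ℝ F) (x, y) (0, 1) v) y := by
    intro x y v
    have h1 : HasDerivAt (fun y' : ℝ => ((x, y') : ℝ × ℝ)) ((0:ℝ), (1:ℝ)) y :=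
      HasDerivAt.prodMk (hasDerivAt_const y x) (hasDerivAt_id y)
    have h2 : HasDerivAt (fun y' => fderiv ℝ F (x, y'))
        (fderiv ℝ (fderiv ℝ F) (x, y) (0, 1)) y :=
      (hgd (x, y)).hasFDerivAt.comp_hasDerivAt y h1
    have h3 := h2.clm_apply (hasDerivAt_const y v)
    simpa using h3
  intro x y
  set G := fderiv ℝ (fderiv ℝ F) (x, y) with hGdef
  -- symmetry of the second derivative
  have hsymm : G (1, 0) (0, 1) = G (0, 1) (1, 0) :=
    second_derivative_symmetric (fun p => (hFd p).hasFDerivAt)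
      ((hgd (x, y)).hasFDerivAt) (1, 0) (0, 1)
  -- second pure derivatives in terms of G
  have hxx' : deriv (fun x' => deriv (fun x'' => π x'' y) x') x = G (1, 0) (1, 0) := by
    have : (fun x' => deriv (fun x'' => π x'' y) x') = fun x' => fderiv ℝ F (x', y) (1, 0) := by
      funext x'; exact (hA x' y).deriv
    rw [this]; exact (hGx x y (1, 0)).deriv
  have hyy' : deriv (fun y' => deriv (fun y'' => π x y'') y') y = G (0, 1) (0, 1) := by
    have : (fun y' => deriv (fun y'' => π x y'') y') = fun y' => fderiv ℝ F (x, y') (0, 1) := by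
      funext y'; exact (hB x y').deriv
    rw [this]; exact (hGy x y (0, 1)).deriv
  -- differentiate hbwd in x:  G(1,0)(0,1) = -(mt' y) * G(1,0)(1,0)
  have eq1 : G (1, 0) (0, 1) = -(deriv mt y) * G (1, 0) (1, 0) := by
    have hfun : (fun x' => fderiv ℝ F (x', y) (0, 1))
        = fun x' => -(deriv mt y) * fderiv ℝ F (x', y) (1, 0) + deriv lpy y := by
      funext x'
      have := hbwd x' y
      rw [(hB x' y).deriv, (hA x' y).deriv] at this
      exact this
    have h1 := hGx x y ((0:ℝ), (1:ℝ))
    rw [hfun] at h1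
    have h2 : HasDerivAt (fun x' => -(deriv mt y) * fderiv ℝ F (x', y) (1, 0) + deriv lpy y)
        (-(deriv mt y) * G (1, 0) (1, 0)) x :=
      ((hGx x y (1, 0)).const_mul _).add_const _
    exact h1.unique h2
  -- differentiate hfwd in y:  G(0,1)(1,0) = -(m' x) * G(0,1)(0,1)
  have eq2 : G (0, 1) (1, 0) = -(deriv m x) * G (0, 1) (0, 1) := by
    have hfun : (fun y' => fderiv ℝ F (x, y') (1, 0))
        = fun y' => -(deriv m x) * fderiv ℝ F (x, y') (0, 1) + deriv lpx x := by
      funext y'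
      have := hfwd x y'
      rw [(hA x y').deriv, (hB x y').deriv] at this
      exact this
    have h1 := hGy x y ((1:ℝ), (0:ℝ))
    rw [hfun] at h1
    have h2 : HasDerivAt (fun y' => -(deriv m x) * fderiv ℝ F (x, y') (0, 1) + deriv lpx x)
        (-(deriv m x) * G (0, 1) (0, 1)) y :=
      ((hGy x y (0, 1)).const_mul _).add_const _
    exact h1.unique h2
  have hxx0 : G (1, 0) (1, 0) ≠ 0 := by rw [← hxx']; exact hxx x y
  rw [hxx', hyy']
  have key : -(deriv mt y) * G (1, 0) (1, 0) = -(deriv m x) * G (0, 1) (0, 1) := by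
    rw [← eq1, hsymm, eq2]
  field_simp
  nlinarith [key]
end
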